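/- For any ν ∈ V, any τ ∈ W and any β ∈ Φ⁺, set κ = s_βτ and B = {γ ∈ Φ⁺ : s_β(γ) ∈ −Φ⁺}. Then Σ_{γ∈Φ⁺} ⟨κν, γ∨⟩ − Σ_{γ∈Φ⁺} ⟨τν, γ∨⟩ = 2·( Σ_{γ∈B, ⟨κν,γ∨⟩ ≥ 0} ⟨κν, γ∨⟩ − Σ_{γ∈B, ⟨τν,γ∨⟩ ≥ 0} ⟨τν, γ∨⟩ ). (This is the reduction, used in the paper's LS-gallery dimension computation, of the difference of ρ-pairings ⟨κν − τν, 2ρ∨⟩ to sums over the inversion set B of s_β.) -/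

import Mathlib

open scoped RealInnerProductSpace

variable {V : Type*} [NormedAddCommGroup V] [InnerProductSpace ℝ V] [FiniteDimensional ℝ V]

/-- The coroot `γ∨ = 2γ/(γ,γ)` of a vector `γ`. -/
noncomputable def coroot (γ : V) : V := (2 / ⟪γ, γ⟫) • γ

/-- The orthogonal reflection `s_γ` fixing the hyperplane orthogonal to `γ`. -/
noncomputable def sRefl (γ : V) : V ≃ₗᵢ[ℝ] V := Submodule.reflection ((ℝ ∙ γ)ᗮ)

/-- The Weyl group generated by the reflections along the roots in `Φ`. -/
noncomputable def weylGroup (Φ : Finset V) : Subgroup (V ≃ₗᵢ[ℝ] V) :=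
  Subgroup.closure {g | ∃ γ ∈ Φ, g = sRefl γ}

/-- Word length with respect to the simple reflections `s_{α_1}, …, s_{α_n}`. -/
noncomputable def lengthW {n : ℕ} (α : Fin n → V) (w : V ≃ₗᵢ[ℝ] V) : ℕ :=
  sInf {m | ∃ f : Fin m → Fin n, (List.ofFn fun j => sRefl (α (f j))).prod = w}

/-- The Bruhat order: generated by `u < s_γ * u` for positive roots `γ` with `ℓ(u) < ℓ(s_γ u)`. -/
def bruhatLE {n : ℕ} (pos : Finset V) (α : Fin n → V) (u v : V ≃ₗᵢ[ℝ] V) : Prop :=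
  Relation.ReflTransGen
    (fun a b => ∃ γ ∈ pos, b = sRefl γ * a ∧ lengthW α a < lengthW α b) u v

/-- The maximal standard parabolic subgroup generated by the `s_{α_j}`, `j ≠ k`. -/
noncomputable def maxParabolic {n : ℕ} (α : Fin n → V) (k : Fin n) : Subgroup (V ≃ₗᵢ[ℝ] V) :=
  Subgroup.closure {g | ∃ j : Fin n, j ≠ k ∧ g = sRefl (α j)}

attribute [local instance] Classical.propDecidable

/-!
Write `f γ = ⟨τν, γ∨⟩`; since `s_β` is self-adjoint and commutes with taking coroots, the
`κ`-pairings are `f ∘ s_β`, and `f` is odd. The reflection `s_β` permutes `Φ⁺ \ B`, while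
`γ ↦ -s_β γ` permutes `B`, so `Σ_{Φ⁺} f ∘ s_β = Σ_{Φ⁺} f - 2 Σ_B f`. The same substitution on `B`
turns the nonnegative part of `f ∘ s_β` into minus the nonpositive part of `f`, and the two sign
parts of `f` on `B` add up to `Σ_B f`.
-/

open Finset Function

theorem Finset.sum_comp_of_involutive {ι M : Type*} [AddCommMonoid M] {S : Finset ι}
    {σ : ι → ι} (hσ : Involutive σ) (hS : ∀ x ∈ S, σ x ∈ S) (g : ι → M) :
    ∑ x ∈ S, g (σ x) = ∑ x ∈ S, g x :=
  sum_nbij' σ σ hS hS (fun x _ => hσ x) (fun x _ => hσ x) fun _ _ => rfl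

theorem Finset.sum_filter_nonpos_add_sum_filter_nonneg {ι M : Type*} [AddCommGroup M]
    [LinearOrder M] [IsOrderedAddMonoid M] (S : Finset ι) (g : ι → M) :
    ∑ x ∈ S with g x ≤ 0, g x + ∑ x ∈ S with 0 ≤ g x, g x = ∑ x ∈ S, g x := by
  rw [sum_filter, sum_filter, ← sum_add_distrib]
  refine sum_congr rfl fun x _ => ?_
  rcases lt_trichotomy (g x) 0 with h | h | h
  · simp [h.le, h.not_ge]
  · simp [h]
  · simp [h.le, h.not_ge]

section InversionSet

variable {G M : Type*} [InvolutiveNeg G] [AddCommGroup M] {pos : Finset G} {s : G → G}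

noncomputable def inversionSet (pos : Finset G) (s : G → G) : Finset G :=
  pos.filter fun γ => -s γ ∈ pos

theorem inversionSet_subset : inversionSet pos s ⊆ pos :=
  filter_subset _ _

theorem involutive_neg_comp (hs : Involutive s) (hs_neg : ∀ x, s (-x) = -s x) :
    Involutive fun x => -s x := fun x => by
  simp only [hs_neg, hs x, neg_neg]

theorem neg_apply_mem_inversionSet (hs : Involutive s) (hs_neg : ∀ x, s (-x) = -s x) {γ : G}
    (hγ : γ ∈ inversionSet pos s) : -s γ ∈ inversionSet pos s := by
  simp only [inversionSet, mem_filter] at hγ ⊢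
  have hback : -s (-s γ) = γ := involutive_neg_comp hs hs_neg γ
  exact ⟨hγ.2, by rw [hback]; exact hγ.1⟩

theorem apply_mem_sdiff_inversionSet (hs : Involutive s)
    (hmaps : ∀ γ ∈ pos, s γ ∈ pos ∨ -s γ ∈ pos) (hpos_neg : ∀ γ ∈ pos, -γ ∉ pos) {γ : G}
    (hγ : γ ∈ pos \ inversionSet pos s) : s γ ∈ pos \ inversionSet pos s := by
  simp only [inversionSet, mem_sdiff, mem_filter, not_and] at hγ ⊢
  obtain ⟨hγ, hγB⟩ := hγ
  exact ⟨(hmaps γ hγ).resolve_right (hγB hγ), fun _ => by rw [hs]; exact hpos_neg γ hγ⟩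

variable {f : G → M}

theorem sum_inversionSet_comp (hs : Involutive s) (hs_neg : ∀ x, s (-x) = -s x)
    (hf : ∀ x, f (-x) = -f x) :
    ∑ γ ∈ inversionSet pos s, f (s γ) = -∑ γ ∈ inversionSet pos s, f γ := by
  rw [← sum_comp_of_involutive (involutive_neg_comp hs hs_neg)
    (fun _ => neg_apply_mem_inversionSet hs hs_neg) f, ← sum_neg_distrib]
  simp only [hf, neg_neg]

theorem sum_comp_eq_sum_sub_two_nsmul_sum_inversionSet (hs : Involutive s)
    (hs_neg : ∀ x, s (-x) = -s x) (hmaps : ∀ γ ∈ pos, s γ ∈ pos ∨ -s γ ∈ pos)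
    (hpos_neg : ∀ γ ∈ pos, -γ ∉ pos) (hf : ∀ x, f (-x) = -f x) :
    ∑ γ ∈ pos, f (s γ) = ∑ γ ∈ pos, f γ - 2 • ∑ γ ∈ inversionSet pos s, f γ := by
  rw [← sum_sdiff inversionSet_subset, ← sum_sdiff inversionSet_subset (f := f),
    sum_comp_of_involutive hs (fun _ => apply_mem_sdiff_inversionSet hs hmaps hpos_neg),
    sum_inversionSet_comp hs hs_neg hf]
  abel

theorem sum_inversionSet_filter_nonneg_comp [LinearOrder M] [IsOrderedAddMonoid M]
    (hs : Involutive s) (hs_neg : ∀ x, s (-x) = -s x) (hf : ∀ x, f (-x) = -f x) :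
    ∑ γ ∈ inversionSet pos s with 0 ≤ f (s γ), f (s γ) =
      -∑ γ ∈ inversionSet pos s with f γ ≤ 0, f γ := by
  rw [sum_filter, sum_filter, ← sum_comp_of_involutive (involutive_neg_comp hs hs_neg)
    (fun _ => neg_apply_mem_inversionSet hs hs_neg) fun γ => if f γ ≤ 0 then f γ else 0,
    ← sum_neg_distrib]
  refine sum_congr rfl fun γ _ => ?_
  simp only [hf, neg_nonpos]
  split_ifs <;> simp

end InversionSet

section Reflection

variable {V : Type*} [NormedAddCommGroup V] [InnerProductSpace ℝ V]

theorem sRefl_involutive (β : V) : Involutive (sRefl β) :=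
  Submodule.reflection_involutive _

theorem inner_sRefl_left (β x y : V) : ⟪sRefl β x, y⟫ = ⟪x, sRefl β y⟫ := by
  rw [LinearIsometryEquiv.inner_map_eq_flip, sRefl, Submodule.reflection_symm]

theorem coroot_map (e : V ≃ₗᵢ[ℝ] V) (γ : V) : coroot (e γ) = e (coroot γ) := by
  rw [coroot, coroot, e.inner_map_map, map_smul]

theorem coroot_neg (γ : V) : coroot (-γ) = -coroot γ := by
  rw [coroot, coroot, inner_neg_neg, smul_neg]

theorem inner_sRefl_coroot (β x γ : V) :
    ⟪sRefl β x, coroot γ⟫ = ⟪x, coroot (sRefl β γ)⟫ := by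
  rw [inner_sRefl_left, coroot_map]

end Reflection

theorem statement4_general {V : Type*} [NormedAddCommGroup V] [InnerProductSpace ℝ V]
    (Φ pos : Finset V)
    -- `Φ` is a finite reduced crystallographic root system spanning `V`:
    (hreflmem : ∀ γ ∈ Φ, ∀ δ ∈ Φ, sRefl γ δ ∈ Φ)
    -- `pos` is a system of positive roots with simple roots `α_1, …, α_n`:
    (hpos : pos ⊆ Φ)
    (hsplit : ∀ γ ∈ Φ, γ ∈ pos ∨ -γ ∈ pos)
    (hnotboth : ∀ γ ∈ pos, -γ ∉ pos)
    -- arbitrary `ν ∈ V`, `τ ∈ W` and `β ∈ Φ⁺`: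
    (ν : V) (τ : V ≃ₗᵢ[ℝ] V)
    (β : V) (hβ : β ∈ pos) :
    (∑ γ ∈ pos, ⟪(sRefl β * τ) ν, coroot γ⟫) - (∑ γ ∈ pos, ⟪τ ν, coroot γ⟫) =
      2 * ((∑ γ ∈ pos.filter
              (fun γ => -(sRefl β γ) ∈ pos ∧ 0 ≤ ⟪(sRefl β * τ) ν, coroot γ⟫),
              ⟪(sRefl β * τ) ν, coroot γ⟫) -
           (∑ γ ∈ pos.filter
              (fun γ => -(sRefl β γ) ∈ pos ∧ 0 ≤ ⟪τ ν, coroot γ⟫),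
              ⟪τ ν, coroot γ⟫)) := by
  set f : V → ℝ := fun γ => ⟪τ ν, coroot γ⟫
  have hf : ∀ x, f (-x) = -f x := fun x => by simp only [f, coroot_neg, inner_neg_right]
  have hκ : ∀ γ, ⟪(sRefl β * τ) ν, coroot γ⟫ = f (sRefl β γ) :=
    fun γ => inner_sRefl_coroot β (τ ν) γ
  have hmaps : ∀ γ ∈ pos, sRefl β γ ∈ pos ∨ -sRefl β γ ∈ pos :=
    fun γ hγ => hsplit _ (hreflmem β (hpos hβ) γ (hpos hγ))
  have hs := sRefl_involutive β
  have hs_neg : ∀ x, sRefl β (-x) = -sRefl β x := map_neg _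
  have hsum := sum_comp_eq_sum_sub_two_nsmul_sum_inversionSet hs hs_neg hmaps hnotboth hf
  have hpos_part := sum_inversionSet_filter_nonneg_comp (pos := pos) hs hs_neg hf
  have hsign := sum_filter_nonpos_add_sum_filter_nonneg (inversionSet pos (sRefl β)) f
  simp only [inversionSet, filter_filter, nsmul_eq_mul] at hsum hpos_part hsign
  simp only [hκ, hsum, hpos_part]
  push_cast
  linarith

/-- For any `ν`, `τ ∈ W`, `β ∈ Φ⁺` and `κ = s_βτ`:
`Σ_{γ∈Φ⁺} ⟨κν, γ∨⟩ − Σ_{γ∈Φ⁺} ⟨τν, γ∨⟩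
  = 2·(Σ_{γ∈B, ⟨κν,γ∨⟩≥0} ⟨κν, γ∨⟩ − Σ_{γ∈B, ⟨τν,γ∨⟩≥0} ⟨τν, γ∨⟩)`,
where `B = {γ ∈ Φ⁺ : s_β(γ) ∈ −Φ⁺}` is the inversion set of `s_β`. -/
theorem statement4 {V : Type*} [NormedAddCommGroup V] [InnerProductSpace ℝ V]
    [FiniteDimensional ℝ V] {n : ℕ}
    (Φ pos : Finset V) (α : Fin n → V)
    -- `Φ` is a finite reduced crystallographic root system spanning `V`:
    (hΦne : ∀ γ ∈ Φ, γ ≠ (0 : V))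
    (hspan : Submodule.span ℝ (Φ : Set V) = ⊤)
    (hreflmem : ∀ γ ∈ Φ, ∀ δ ∈ Φ, sRefl γ δ ∈ Φ)
    (hcrys : ∀ γ ∈ Φ, ∀ δ ∈ Φ, ∃ m : ℤ, ⟪γ, coroot δ⟫ = (m : ℝ))
    (hreduced : ∀ γ ∈ Φ, ∀ t : ℝ, t • γ ∈ Φ → t = 1 ∨ t = -1)
    -- `pos` is a system of positive roots with simple roots `α_1, …, α_n`:
    (hpos : pos ⊆ Φ)
    (hsplit : ∀ γ ∈ Φ, γ ∈ pos ∨ -γ ∈ pos)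
    (hnotboth : ∀ γ ∈ pos, -γ ∉ pos)
    (hsimple : ∀ i, α i ∈ pos)
    (hsimplespan : ∀ γ ∈ pos, ∃ c : Fin n → ℝ, (∀ i, 0 ≤ c i) ∧ γ = ∑ i, c i • α i)
    -- arbitrary `ν ∈ V`, `τ ∈ W` and `β ∈ Φ⁺`:
    (ν : V) (τ : V ≃ₗᵢ[ℝ] V) (hτ : τ ∈ weylGroup Φ)
    (β : V) (hβ : β ∈ pos) :
    (∑ γ ∈ pos, ⟪(sRefl β * τ) ν, coroot γ⟫) - (∑ γ ∈ pos, ⟪τ ν, coroot γ⟫) =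
      2 * ((∑ γ ∈ pos.filter
              (fun γ => -(sRefl β γ) ∈ pos ∧ 0 ≤ ⟪(sRefl β * τ) ν, coroot γ⟫),
              ⟪(sRefl β * τ) ν, coroot γ⟫) -
           (∑ γ ∈ pos.filter
              (fun γ => -(sRefl β γ) ∈ pos ∧ 0 ≤ ⟪τ ν, coroot γ⟫),
              ⟪τ ν, coroot γ⟫)) :=
  statement4_general Φ pos hreflmem hpos hsplit hnotboth ν τ β hβ
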